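/- Let C be a nonempty closed convex subset of a real Hilbert space H, let (T_i)_{i≥1} be a family of nonexpansive mappings T_i : C → C with ⋂_{i=1}^∞ Fix(T_i) ≠ ∅, and let (μ_i) be reals with 0 < μ_i ≤ μ < 1 for all i ≥ 1, so that the limit mapping W x = lim_{n→∞} W_n x exists for x ∈ C. Then for every bounded subset K of C, lim_{n→∞} sup_{x∈K} ‖W x − W_n x‖ = 0, i.e. W_n → W uniformly on bounded subsets of C. -/

import Mathlib

open Filter Topology

/-- The mappings `U n k` of Shimoji–Takahashi: `U n k = I` for `k ≥ n+1` and
`U n k = μ k • T k ∘ U n (k+1) + (1 - μ k) • I` for `k ≤ n`. -/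
noncomputable def Umap {H : Type*} [AddCommGroup H] [Module ℝ H]
    (T : ℕ → H → H) (μ : ℕ → ℝ) (n k : ℕ) (x : H) : H :=
  if n + 1 ≤ k then x
  else μ k • T k (Umap T μ n (k + 1) x) + (1 - μ k) • x
termination_by n + 1 - k
decreasing_by omega

/-- The `W`-mapping `W n = U n 1` generated by `T 1, T 2, …` and `μ 1, μ 2, …`. -/
noncomputable def Wmap {H : Type*} [AddCommGroup H] [Module ℝ H]
    (T : ℕ → H → H) (μ : ℕ → ℝ) (n : ℕ) (x : H) : H :=
  Umap T μ n 1 x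

/-! Each `W n` is `W (n+1)` with `T (n+1)` switched off, and nonexpansiveness propagates the
difference `μ (n+1) (T (n+1) x - x)` made at level `n+1` down to level `1` contracted by a
factor `μ k ≤ μbar` at each level `k`, so `‖W (n+1) x - W n x‖ ≤ μbar ^ n ‖T (n+1) x - x‖`.
If `p` is a common fixed point, `‖T i x - x‖ ≤ 2 ‖x - p‖`, which is bounded on a bounded set,
so summing the geometric tail gives `‖W x - W n x‖ ≤ 2 R μbar ^ n / (1 - μbar)` uniformly. -/

theorem tendstoUniformlyOn_of_dist_le {ι α β : Type*} [PseudoMetricSpace α]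
    {F : ι → β → α} {f : β → α} {l : Filter ι} {s : Set β} {b : ι → ℝ}
    (hb : Tendsto b l (𝓝 0)) (h : ∀ n, ∀ x ∈ s, dist (f x) (F n x) ≤ b n) :
    TendstoUniformlyOn F f l s := by
  rw [Metric.tendstoUniformlyOn_iff]
  intro ε hε
  filter_upwards [hb.eventually (gt_mem_nhds hε)] with n hn x hx
  exact (h n x hx).trans_lt hn

theorem norm_sub_self_le_of_fixed {H : Type*} [SeminormedAddCommGroup H] {T : H → H} {x p : H}
    (hTp : T p = p) (hT : ‖T x - T p‖ ≤ ‖x - p‖) : ‖T x - x‖ ≤ 2 * ‖x - p‖ :=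
  calc ‖T x - x‖ = ‖(T x - T p) + (p - x)‖ := by rw [hTp]; abel_nf
    _ ≤ ‖T x - T p‖ + ‖p - x‖ := norm_add_le _ _
    _ ≤ ‖x - p‖ + ‖x - p‖ := by rw [norm_sub_rev p x]; gcongr
    _ = 2 * ‖x - p‖ := by ring

section Umap

variable {H : Type*} [AddCommGroup H] [Module ℝ H] {T : ℕ → H → H} {μ : ℕ → ℝ}

theorem Umap_of_le {n k : ℕ} (h : n + 1 ≤ k) (x : H) : Umap T μ n k x = x := by
  rw [Umap, if_pos h]

theorem Umap_of_lt {n k : ℕ} (h : k < n + 1) (x : H) :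
    Umap T μ n k x = μ k • T k (Umap T μ n (k + 1) x) + (1 - μ k) • x := by
  rw [Umap, if_neg (by omega)]

theorem Umap_mem {C : Set H} (hC : Convex ℝ C) (hTmaps : ∀ i, 1 ≤ i → Set.MapsTo (T i) C C)
    (hμ : ∀ i, 1 ≤ i → μ i ∈ Set.Icc (0 : ℝ) 1) (n : ℕ) {k : ℕ} (hk : 1 ≤ k) {x : H}
    (hx : x ∈ C) : Umap T μ n k x ∈ C := by
  rcases le_or_gt (n + 1) k with hnk | hkn
  · rwa [Umap_of_le hnk]
  · rw [Umap_of_lt hkn]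
    have hUx := Umap_mem hC hTmaps hμ n (k := k + 1) (by omega) hx
    exact hC (hTmaps k hk hUx) hx (hμ k hk).1 (by linarith [(hμ k hk).2]) (by ring)
termination_by n + 1 - k

end Umap

section NormEstimates

variable {H : Type*} [SeminormedAddCommGroup H] [NormedSpace ℝ H] {C : Set H}
  {T : ℕ → H → H} {μ : ℕ → ℝ} {μbar : ℝ}

theorem norm_Umap_succ_sub_Umap_le (hC : Convex ℝ C) (hTmaps : ∀ i, 1 ≤ i → Set.MapsTo (T i) C C)
    (hTne : ∀ i, 1 ≤ i → ∀ x ∈ C, ∀ y ∈ C, ‖T i x - T i y‖ ≤ ‖x - y‖)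
    (hμ : ∀ i, 1 ≤ i → μ i ∈ Set.Icc (0 : ℝ) 1) (hμbar : ∀ i, 1 ≤ i → μ i ≤ μbar)
    (n : ℕ) {k : ℕ} (hk : 1 ≤ k) (hkn : k ≤ n + 1) {x : H} (hx : x ∈ C) :
    ‖Umap T μ (n + 1) k x - Umap T μ n k x‖ ≤ μbar ^ (n + 1 - k) * ‖T (n + 1) x - x‖ := by
  obtain ⟨hμ0, hμ1⟩ := hμ k hk
  rcases hkn.eq_or_lt with rfl | hkn
  · have hdiff : Umap T μ (n + 1) (n + 1) x - Umap T μ n (n + 1) x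
        = μ (n + 1) • (T (n + 1) x - x) := by
      rw [Umap_of_lt (by omega), Umap_of_le le_rfl, Umap_of_le le_rfl, smul_sub, sub_smul,
        one_smul]
      abel
    rw [hdiff, norm_smul, Real.norm_of_nonneg hμ0, Nat.sub_self, pow_zero]
    exact mul_le_mul_of_nonneg_right hμ1 (norm_nonneg _)
  · have hdiff : Umap T μ (n + 1) k x - Umap T μ n k x
        = μ k • (T k (Umap T μ (n + 1) (k + 1) x) - T k (Umap T μ n (k + 1) x)) := by
      rw [Umap_of_lt (by omega), Umap_of_lt hkn, smul_sub]
      abel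
    have ih := norm_Umap_succ_sub_Umap_le hC hTmaps hTne hμ hμbar n (k := k + 1) (by omega)
      (by omega) hx
    have hT := hTne k hk _ (Umap_mem hC hTmaps hμ (n + 1) (k := k + 1) (by omega) hx)
      _ (Umap_mem hC hTmaps hμ n (k := k + 1) (by omega) hx)
    rw [hdiff, norm_smul, Real.norm_of_nonneg hμ0,
      show n + 1 - k = (n + 1 - (k + 1)) + 1 by omega, pow_succ']
    calc μ k * ‖T k (Umap T μ (n + 1) (k + 1) x) - T k (Umap T μ n (k + 1) x)‖
        ≤ μ k * (μbar ^ (n + 1 - (k + 1)) * ‖T (n + 1) x - x‖) := by gcongr; exact hT.trans ih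
      _ ≤ μbar * (μbar ^ (n + 1 - (k + 1)) * ‖T (n + 1) x - x‖) := by
          have hμbar0 : 0 ≤ μbar := hμ0.trans (hμbar k hk)
          exact mul_le_mul_of_nonneg_right (hμbar k hk)
            (mul_nonneg (pow_nonneg hμbar0 _) (norm_nonneg _))
      _ = _ := by ring
termination_by n + 1 - k

theorem norm_Wmap_succ_sub_Wmap_le (hC : Convex ℝ C) (hTmaps : ∀ i, 1 ≤ i → Set.MapsTo (T i) C C)
    (hTne : ∀ i, 1 ≤ i → ∀ x ∈ C, ∀ y ∈ C, ‖T i x - T i y‖ ≤ ‖x - y‖)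
    (hμ : ∀ i, 1 ≤ i → μ i ∈ Set.Icc (0 : ℝ) 1) (hμbar : ∀ i, 1 ≤ i → μ i ≤ μbar)
    (n : ℕ) {x : H} (hx : x ∈ C) :
    ‖Wmap T μ (n + 1) x - Wmap T μ n x‖ ≤ μbar ^ n * ‖T (n + 1) x - x‖ := by
  simpa [Wmap] using norm_Umap_succ_sub_Umap_le hC hTmaps hTne hμ hμbar n le_rfl (by omega) hx

end NormEstimates

theorem stmt_12_general {H : Type*} [NormedAddCommGroup H] [InnerProductSpace ℝ H]
    (C : Set H) (hCcv : Convex ℝ C)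
    (T : ℕ → H → H)
    (hTmaps : ∀ i, 1 ≤ i → Set.MapsTo (T i) C C)
    (hTne : ∀ i, 1 ≤ i → ∀ x ∈ C, ∀ y ∈ C, ‖T i x - T i y‖ ≤ ‖x - y‖)
    (hFix : ∃ x ∈ C, ∀ i, 1 ≤ i → T i x = x)
    (μ : ℕ → ℝ) (μbar : ℝ) (hμbar : μbar < 1)
    (hμ : ∀ i, 1 ≤ i → 0 < μ i ∧ μ i ≤ μbar)
    (W : H → H)
    (hW : ∀ x ∈ C, Tendsto (fun n => Wmap T μ n x) atTop (𝓝 (W x))) :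
    ∀ K ⊆ C, Bornology.IsBounded K →
      TendstoUniformlyOn (fun n x => Wmap T μ n x) W atTop K := by
  obtain ⟨p, hpC, hpfix⟩ := hFix
  have hμI : ∀ i, 1 ≤ i → μ i ∈ Set.Icc (0 : ℝ) 1 :=
    fun i hi => ⟨(hμ i hi).1.le, by linarith [(hμ i hi).2]⟩
  have hμbar0 : 0 ≤ μbar := (hμI 1 le_rfl).1.trans (hμ 1 le_rfl).2
  intro K hKC hKb
  obtain ⟨R, hR⟩ := (Metric.isBounded_iff_subset_closedBall p).1 hKb
  refine tendstoUniformlyOn_of_dist_le (b := fun n => 2 * R * μbar ^ n / (1 - μbar)) ?_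
    fun n x hx => ?_
  · simpa using ((tendsto_pow_atTop_nhds_zero_of_lt_one hμbar0 hμbar).const_mul (2 * R)).div_const
      (1 - μbar)
  have hxC := hKC hx
  have hxp : ‖x - p‖ ≤ R := by simpa [dist_eq_norm] using hR hx
  have hstep : ∀ m, dist (Wmap T μ m x) (Wmap T μ (m + 1) x) ≤ 2 * R * μbar ^ m := fun m =>
    calc dist (Wmap T μ m x) (Wmap T μ (m + 1) x)
        ≤ μbar ^ m * ‖T (m + 1) x - x‖ := by
          rw [dist_comm, dist_eq_norm]
          exact norm_Wmap_succ_sub_Wmap_le hCcv hTmaps hTne hμI (fun i hi => (hμ i hi).2) m hxC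
      _ ≤ μbar ^ m * (2 * R) := by
          gcongr
          exact (norm_sub_self_le_of_fixed (hpfix _ m.succ_pos)
            (hTne _ m.succ_pos x hxC p hpC)).trans (by linarith)
      _ = 2 * R * μbar ^ m := by ring
  rw [dist_comm]
  exact dist_le_of_le_geometric_of_tendsto _ _ hμbar hstep (hW x hxC) n

/-- For an infinite family of nonexpansive self-maps `T i` of a nonempty closed
convex `C ⊆ H` with a common fixed point and `0 < μ i ≤ μbar < 1`, the
`W`-mappings `W n` converge to the limit map `W` uniformly on every bounded
subset `K` of `C`, i.e. `lim_n sup_{x ∈ K} ‖W x - W n x‖ = 0`. -/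
theorem stmt_12 {H : Type*} [NormedAddCommGroup H] [InnerProductSpace ℝ H]
    [CompleteSpace H]
    (C : Set H) (hCne : C.Nonempty) (hCcl : IsClosed C) (hCcv : Convex ℝ C)
    (T : ℕ → H → H)
    (hTmaps : ∀ i, 1 ≤ i → Set.MapsTo (T i) C C)
    (hTne : ∀ i, 1 ≤ i → ∀ x ∈ C, ∀ y ∈ C, ‖T i x - T i y‖ ≤ ‖x - y‖)
    (hFix : ∃ x ∈ C, ∀ i, 1 ≤ i → T i x = x)
    (μ : ℕ → ℝ) (μbar : ℝ) (hμbar : μbar < 1)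
    (hμ : ∀ i, 1 ≤ i → 0 < μ i ∧ μ i ≤ μbar)
    (W : H → H)
    (hW : ∀ x ∈ C, Tendsto (fun n => Wmap T μ n x) atTop (𝓝 (W x))) :
    ∀ K ⊆ C, Bornology.IsBounded K →
      TendstoUniformlyOn (fun n x => Wmap T μ n x) W atTop K :=
  stmt_12_general C hCcv T hTmaps hTne hFix μ μbar hμbar hμ W hW
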